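/- arXiv:0710.1398 — 2 statements merged into one kernel-verified Lean document; each statement's English description precedes it below -/
import Mathlib

section
/- Let E be an irreflexive, transitive binary relation on a type α satisfying the interval-order condition (E p q ∧ E r s → E p s ∨ E r q), and let S p q ↔ (¬ E p q ∧ ¬ E q p). Define a relation ≺ on maximal S-cliques by T ≺ T' iff there exist p ∈ T and p' ∈ T' with E p p'. Then ≺ is a strict linear order on the set of maximal S-cliques: it is irreflexive, transitive, and any two distinct maximal S-cliques are comparable. -/
/-- The relation "T precedes T'" on maximal simultaneity-cliques (time points)
is a strict linear order: irreflexive, transitive, and total on distinct cliques. -/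
theorem time_points_linearly_ordered {α : Type*} (E : α → α → Prop)
    (hirr : Irreflexive E) (htrans : Transitive E)
    (hinterval : ∀ p q r s, E p q → E r s → E p s ∨ E r q)
    (S : α → α → Prop) (hS : ∀ p q, S p q ↔ (¬ E p q ∧ ¬ E q p))
    (MaxClique : Set α → Prop)
    (hMC : ∀ T, MaxClique T ↔ ∀ q, q ∈ T ↔ ∀ p ∈ T, S p q)
    (Prec : Set α → Set α → Prop)
    (hPrec : ∀ T T', Prec T T' ↔ ∃ p ∈ T, ∃ p' ∈ T', E p p') :
    (∀ T, MaxClique T → ¬ Prec T T) ∧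
    (∀ T T' T'', MaxClique T → MaxClique T' → MaxClique T'' →
      Prec T T' → Prec T' T'' → Prec T T'') ∧
    (∀ T T', MaxClique T → MaxClique T' → T ≠ T' → Prec T T' ∨ Prec T' T) := by
  refine ⟨?_, ?_, ?_⟩
  · intro T hT hP
    obtain ⟨p, hp, q, hq, hE⟩ := (hPrec T T).1 hP
    have hSpq := ((hMC T).1 hT q).1 hq p hp
    exact ((hS p q).1 hSpq).1 hE
  · intro T T' T'' hT hT' hT'' h1 h2
    obtain ⟨p, hp, q, hq, hpq⟩ := (hPrec T T').1 h1
    obtain ⟨r, hr, s, hs, hrs⟩ := (hPrec T' T'').1 h2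
    rcases hinterval p q r s hpq hrs with h | h
    · exact (hPrec T T'').2 ⟨p, hp, s, hs, h⟩
    · have hSqr := ((hMC T').1 hT' r).1 hr q hq
      exact absurd h (((hS q r).1 hSqr).2)
  · intro T T' hT hT' hne
    by_contra hcon
    push_neg at hcon
    obtain ⟨h1, h2⟩ := hcon
    rw [hPrec] at h1 h2
    push_neg at h1 h2
    apply hne
    ext q
    constructor
    · intro hq
      refine ((hMC T').1 hT' q).2 (fun p hp => ?_)
      exact (hS p q).2 ⟨h2 p hp q hq, h1 q hq p hp⟩
    · intro hq
      refine ((hMC T).1 hT q).2 (fun p hp => ?_)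
      exact (hS p q).2 ⟨h1 p hp q hq, h2 q hq p hp⟩
end

section
/- There exist a finite type α, a symmetric irreflexive binary relation C on α, and closed sets P, Q, R (each X satisfying X = (X^⊥)^⊥, where A^⊥ = {p | ∀ q ∈ A, C p q}) such that the distributive law fails: (((P ∪ Q)^⊥)^⊥) ∩ R ≠ ((((P ∩ R) ∪ (Q ∩ R))^⊥)^⊥). That is, in the lattice of closed sets with infimum given by intersection and supremum of X, Y given by ((X ∪ Y)^⊥)^⊥, one has (P ⊔ Q) ⊓ R ≠ (P ⊓ R) ⊔ (Q ⊓ R). -/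
/-!
Take four processes paired off by a fixed-point-free involution `σ`, each causally connected
only to its partner. Every singleton is then closed, `{a}^⊥ = {σ a}`. A set containing two
distinct processes has empty polar, so `{a} ⊔ {σ a}` is everything and meets a third singleton
`{c}` in `{c}`; but `{a} ⊓ {c}` and `{σ a} ⊓ {c}` are empty, and by irreflexivity the
closure of `∅` is `∅`.
-/

/-- The polar of a set with respect to a binary relation. -/
def polar {α : Type*} (C : α → α → Prop) (A : Set α) : Set α :=
  {p | ∀ q ∈ A, C p q}

open Set

section Polar

variable {α : Type*} (C : α → α → Prop)

theorem polar_empty : polar C ∅ = univ := by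
  ext p
  simp [polar]

theorem polar_univ_of_irreflexive (hC : Irreflexive C) : polar C univ = ∅ :=
  eq_empty_of_forall_notMem fun p hp => hC p (hp p (mem_univ p))

theorem polar_polar_empty_of_irreflexive (hC : Irreflexive C) : polar C (polar C ∅) = ∅ := by
  rw [polar_empty, polar_univ_of_irreflexive C hC]

theorem polar_singleton (a : α) : polar C {a} = {p | C p a} := by
  ext p
  simp [polar]

end Polar

def matchingRel {α : Type*} (σ : α → α) (p q : α) : Prop :=
  q = σ p

namespace matchingRel

variable {α : Type*} {σ : α → α}

theorem symmetric (hσ : Function.Involutive σ) : Symmetric (matchingRel σ) :=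
  fun p q (h : q = σ p) => show p = σ q by rw [h, hσ]

theorem irreflexive (hfix : ∀ x, σ x ≠ x) : Irreflexive (matchingRel σ) :=
  fun p h => hfix p h.symm

theorem polar_singleton_eq (hσ : Function.Involutive σ) (a : α) :
    polar (matchingRel σ) {a} = {σ a} := by
  ext p
  rw [_root_.polar_singleton, mem_setOf_eq, mem_singleton_iff, matchingRel]
  exact ⟨fun h => by rw [h, hσ], fun h => by rw [h, hσ]⟩

theorem polar_polar_singleton (hσ : Function.Involutive σ) (a : α) :
    polar (matchingRel σ) (polar (matchingRel σ) {a}) = {a} := by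
  rw [polar_singleton_eq hσ, polar_singleton_eq hσ, hσ]

theorem polar_eq_empty_of_ne {A : Set α} {x y : α} (hx : x ∈ A) (hy : y ∈ A) (hxy : x ≠ y) :
    polar (matchingRel σ) A = ∅ :=
  eq_empty_of_forall_notMem fun _ hp => hxy ((hp x hx).trans (hp y hy).symm)

theorem polar_polar_union_inter_ne (hfix : ∀ x, σ x ≠ x)
    {a c : α} (hca : c ≠ a) (hcσa : c ≠ σ a) :
    polar (matchingRel σ) (polar (matchingRel σ) ({a} ∪ {σ a})) ∩ {c} ≠
      polar (matchingRel σ) (polar (matchingRel σ) (({a} ∩ {c}) ∪ ({σ a} ∩ {c}))) := by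
  have hsup : polar (matchingRel σ) ({a} ∪ {σ a}) = ∅ :=
    polar_eq_empty_of_ne (by simp) (by simp) (hfix a).symm
  have hinf : ({a} ∩ {c}) ∪ ({σ a} ∩ {c}) = (∅ : Set α) := by
    simp [hca.symm, hcσa.symm]
  rw [hsup, polar_empty, univ_inter, hinf, polar_polar_empty_of_irreflexive _ (irreflexive hfix)]
  exact singleton_ne_empty c

end matchingRel

/-- The distributive law fails in the lattice of closed sets (time intervals):
the logic of simultaneity is a non-Boolean orthologic. -/
theorem distributivity_fails :
    ∃ (α : Type) (_ : Fintype α) (C : α → α → Prop),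
      Symmetric C ∧ Irreflexive C ∧
      ∃ P Q R : Set α,
        P = polar C (polar C P) ∧ Q = polar C (polar C Q) ∧
        R = polar C (polar C R) ∧
        polar C (polar C (P ∪ Q)) ∩ R ≠
          polar C (polar C ((P ∩ R) ∪ (Q ∩ R))) := by
  let σ : Bool × Bool → Bool × Bool := Prod.map id not
  have hσ : Function.Involutive σ := Function.Involutive.prodMap (fun _ => rfl) Bool.involutive_not
  have hfix : ∀ x, σ x ≠ x := fun x => by simp [σ, Prod.ext_iff]
  refine ⟨Bool × Bool, inferInstance, matchingRel σ, matchingRel.symmetric hσ,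
    matchingRel.irreflexive hfix, {(false, false)}, {σ (false, false)}, {(true, false)},
    (matchingRel.polar_polar_singleton hσ _).symm, (matchingRel.polar_polar_singleton hσ _).symm,
    (matchingRel.polar_polar_singleton hσ _).symm,
    matchingRel.polar_polar_union_inter_ne hfix (by decide) (by decide)⟩
end
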